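/- arXiv:1505.02279 — 4 statements merged into one kernel-verified Lean document; each statement's English description precedes it below -/
import Mathlib

section
/- If a fractional ideal $I$ of a number field $F$ of degree $n$ is reduced in the usual sense (i.e., $1$ is a minimal element of $I$), then the divisor $d(I)$ is strongly $C$-reduced with $C = \sqrt{n}$; that is, $1$ is primitive in $I$ and every nonzero $g \in N(I)^{-1/n} I$ satisfies $\|g\| \ge 1$. -/
open NumberField FractionalIdeal Finset
open scoped nonZeroDivisors

noncomputable def enorm (F : Type*) [Field F] [NumberField F] (g : F) : ℝ :=
  Real.sqrt (∑ w : InfinitePlace F, w.mult * (w g) ^ 2)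

noncomputable def scaleFactor {F : Type*} [Field F] [NumberField F]
    (I : FractionalIdeal (𝓞 F)⁰ F) : ℝ :=
  (FractionalIdeal.absNorm I : ℝ) ^ (-(1 : ℝ) / (Module.finrank ℚ F))

def PrimitiveOne {F : Type*} [Field F] [NumberField F]
    (I : FractionalIdeal (𝓞 F)⁰ F) : Prop :=
  (1 : F) ∈ I ∧ ∀ d : ℕ, 2 ≤ d → ((d : F)⁻¹ ∉ I)

def StronglyReduced {F : Type*} [Field F] [NumberField F] (C : ℝ)
    (I : FractionalIdeal (𝓞 F)⁰ F) : Prop :=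
  PrimitiveOne I ∧
    ∀ g ∈ I, g ≠ 0 → enorm F 1 ≤ C * (scaleFactor I * enorm F g)

noncomputable def parF (F : Type*) [Field F] [NumberField F] : ℝ :=
  (2 / Real.pi) ^ (InfinitePlace.nrComplexPlaces F) * Real.sqrt |(discr F : ℝ)|

/-!
For `0 ≠ g ∈ I` the ideal `I` divides `(g)`, so `N(I) ≤ |N(g)|`, and the AM-GM inequality over
the infinite places, weighted by their multiplicities, gives `‖g‖ ≥ √n · |N(g)|^(1/n)`. Hence
`‖N(I)^(-1/n) g‖ ≥ √n = ‖1‖ ≥ ‖1‖ / √n`. Primitivity of `1` comes from its minimality: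
for `d ≥ 2`, `1/d` is smaller than `1` at every place.
-/

namespace FractionalIdeal

variable {R : Type*} [CommRing R] [IsDedekindDomain R] [Module.Free ℤ R] [Module.Finite ℤ R]
  {K : Type*} [Field K] [Algebra R K] [IsFractionRing R K]

theorem absNorm_le_absNorm_of_le {I J : FractionalIdeal R⁰ K} (hJ : J ≠ 0) (hJI : J ≤ I) :
    absNorm I ≤ absNorm J := by
  have hI : I ≠ 0 := ne_bot_of_le_ne_bot hJ hJI
  have hquot_le_one : I⁻¹ * J ≤ 1 :=
    calc I⁻¹ * J ≤ I⁻¹ * I := by gcongr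
      _ = 1 := inv_mul_cancel₀ hI
  obtain ⟨J₀, hJ₀⟩ := le_one_iff_exists_coeIdeal.mp hquot_le_one
  have hJ_eq : J = I * J₀ := by rw [hJ₀, ← mul_assoc, mul_inv_cancel₀ hI, one_mul]
  have hJ₀_ne : J₀ ≠ ⊥ := by
    rintro rfl
    exact hJ (by rw [hJ_eq, coeIdeal_bot, mul_zero])
  have hJ₀_norm : (1 : ℚ) ≤ Ideal.absNorm J₀ := by
    exact_mod_cast Nat.one_le_iff_ne_zero.mpr (Ideal.absNorm_eq_zero_iff.not.mpr hJ₀_ne)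
  calc absNorm I ≤ absNorm I * Ideal.absNorm J₀ :=
        le_mul_of_one_le_right (absNorm_nonneg I) hJ₀_norm
    _ = absNorm J := by rw [hJ_eq, _root_.map_mul, coeIdeal_absNorm]

end FractionalIdeal

namespace NumberField

variable {F : Type*} [Field F] [NumberField F]

theorem absNorm_le_abs_norm_of_mem {I : FractionalIdeal (𝓞 F)⁰ F} {g : F} (hg : g ∈ I)
    (hg0 : g ≠ 0) : absNorm I ≤ |Algebra.norm ℚ g| := by
  rw [← absNorm_span_singleton (𝓞 F)]
  exact absNorm_le_absNorm_of_le (spanSingleton_ne_zero_iff.mpr hg0)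
    (spanSingleton_le_iff_mem.mpr hg)

theorem enorm_sq (g : F) : enorm F g ^ 2 = ∑ w : InfinitePlace F, w.mult * (w g) ^ 2 :=
  Real.sq_sqrt (Finset.sum_nonneg fun _ _ => by positivity)

theorem enorm_one : enorm F 1 = Real.sqrt (Module.finrank ℚ F) := by
  simp only [_root_.enorm, _root_.map_one, one_pow, mul_one]
  exact_mod_cast congrArg Real.sqrt (congrArg Nat.cast (InfinitePlace.sum_mult_eq (K := F)))

/-- AM-GM applied to the numbers `w(g)^2` with weights `mult w`, whose product is `|N g|^2`. -/
theorem sqrt_finrank_mul_abs_norm_rpow_le_enorm (g : F) :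
    Real.sqrt (Module.finrank ℚ F) *
      |(Algebra.norm ℚ g : ℝ)| ^ ((1 : ℝ) / Module.finrank ℚ F) ≤ enorm F g := by
  have hn : (0 : ℝ) < Module.finrank ℚ F := Nat.cast_pos.mpr Module.finrank_pos
  have hmult_sum : ∑ w : InfinitePlace F, (w.mult : ℝ) = Module.finrank ℚ F := by
    exact_mod_cast InfinitePlace.sum_mult_eq (K := F)
  have hprod : ∏ w : InfinitePlace F, ((w g) ^ 2) ^ (w.mult : ℝ) =
      |(Algebra.norm ℚ g : ℝ)| ^ 2 :=
    calc ∏ w : InfinitePlace F, ((w g) ^ 2) ^ (w.mult : ℝ)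
        = (∏ w : InfinitePlace F, (w g) ^ w.mult) ^ 2 := by
          rw [← Finset.prod_pow]
          refine Finset.prod_congr rfl fun w _ => ?_
          rw [Real.rpow_natCast, ← pow_mul, ← pow_mul, mul_comm]
      _ = |(Algebra.norm ℚ g : ℝ)| ^ 2 := by
          rw [InfinitePlace.prod_eq_abs_norm, Rat.cast_abs]
  have hamgm := Real.geom_mean_le_arith_mean univ (fun w : InfinitePlace F => (w.mult : ℝ))
    (fun w => (w g) ^ 2) (fun _ _ => by positivity) (hmult_sum ▸ hn) (fun _ _ => by positivity)
  rw [hmult_sum, hprod, ← enorm_sq, le_div_iff₀ hn] at hamgm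
  refine (pow_le_pow_iff_left₀ (by positivity) (Real.sqrt_nonneg _) two_ne_zero).mp ?_
  rw [mul_pow, Real.sq_sqrt hn.le, Real.rpow_pow_comm (abs_nonneg _), one_div, mul_comm]
  exact hamgm

theorem sqrt_finrank_le_scaleFactor_mul_enorm {I : FractionalIdeal (𝓞 F)⁰ F} {g : F}
    (hg : g ∈ I) (hg0 : g ≠ 0) :
    Real.sqrt (Module.finrank ℚ F) ≤ scaleFactor I * enorm F g := by
  have hI : I ≠ 0 := fun h => hg0 ((mem_zero_iff _).mp (h ▸ hg))
  have hN : (0 : ℝ) < absNorm I :=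
    Rat.cast_pos.mpr ((absNorm_nonneg I).lt_of_ne' (absNorm_eq_zero_iff.not.mpr hI))
  have hN_le : (absNorm I : ℝ) ≤ |(Algebra.norm ℚ g : ℝ)| := by
    rw [← Rat.cast_abs]
    exact_mod_cast absNorm_le_abs_norm_of_mem hg hg0
  rw [scaleFactor, neg_div, Real.rpow_neg hN.le, inv_mul_eq_div, le_div_iff₀ (by positivity)]
  refine le_trans ?_ (sqrt_finrank_mul_abs_norm_rpow_le_enorm g)
  gcongr

theorem primitiveOne_of_one_minimal {I : FractionalIdeal (𝓞 F)⁰ F} (hone : (1 : F) ∈ I)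
    (hmin : ∀ g ∈ I, (∀ w : InfinitePlace F, w g < w 1) → g = 0) : PrimitiveOne I := by
  refine ⟨hone, fun d hd hmem => ?_⟩
  have hd_inv_lt (w : InfinitePlace F) : w (d : F)⁻¹ < w 1 := by
    rw [map_inv₀, InfinitePlace.map_natCast, _root_.map_one]
    exact inv_lt_one_of_one_lt₀ (by exact_mod_cast hd)
  exact inv_ne_zero (Nat.cast_ne_zero.mpr (by omega)) (hmin _ hmem hd_inv_lt)

end NumberField

theorem stronglyReduced_of_one_minimal {F : Type*} [Field F] [NumberField F]
    (I : FractionalIdeal (𝓞 F)⁰ F) (hone : (1 : F) ∈ I)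
    (hmin : ∀ g ∈ I, (∀ w : InfinitePlace F, w g < w 1) → g = 0) :
    StronglyReduced (Real.sqrt (Module.finrank ℚ F)) I := by
  refine ⟨primitiveOne_of_one_minimal hone hmin, fun g hg hg0 => ?_⟩
  have hone_le_sqrt : 1 ≤ Real.sqrt (Module.finrank ℚ F) :=
    Real.one_le_sqrt.mpr (by exact_mod_cast Module.finrank_pos)
  rw [NumberField.enorm_one]
  exact le_mul_of_one_le_right (Real.sqrt_nonneg _)
    (hone_le_sqrt.trans (sqrt_finrank_le_scaleFactor_mul_enorm hg hg0))
end

section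
/- Let $F$ be a number field of degree $n$, $C \ge 1$, and let $I$ be a fractional ideal with $1 \in I$ such that $N(I^{-1}) \le \partial_F$ (with $\partial_F = (2/\pi)^{r_2}\sqrt{|\Delta_F|}$). Define inductively $J_1 = I$ and $J_{i+1} = f_i^{-1} J_i$ where $f_i$ is a shortest nonzero vector of the lattice $N(J_i)^{-1/n}J_i$, as long as $\|f_i\| < \sqrt{n}/C$. Then this process stops after at most $\frac{\log \partial_F}{n \log C}$ steps (for $C > 1$); i.e., if $\|f_j\| < \sqrt{n}/C$ for all $j = 1,\dots,k$, then $k < \frac{\log \partial_F}{n\log C}$. -/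
open NumberField FractionalIdeal Finset
open scoped nonZeroDivisors

/-
Each step replaces `J` by `f⁻¹ J` and so multiplies `N(J⁻¹)` by `|N(f)|`. Weighted AM-GM over the
infinite places gives `|N(f)| ≤ (‖f‖ / √n)ⁿ < N(J) / Cⁿ ≤ C⁻ⁿ`, the last inequality because
`1 ∈ J`. After `k` steps `C^(nk) N(J_{k+1}⁻¹) < N(J₁⁻¹) ≤ ∂_F`, while `N(J_{k+1}⁻¹) ≥ 1` because
`J_{k+1}⁻¹` is integral (again `1 ∈ J_{k+1}`); taking logarithms bounds `k`.
-/

theorem FractionalIdeal.one_mem_spanSingleton_inv_mul {R K : Type*} [CommRing R] [Field K]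
    [Algebra R K] {S : Submonoid R} [IsLocalization S K] {I : FractionalIdeal S K} {x : K}
    (hx : x ∈ I) (hx0 : x ≠ 0) : (1 : K) ∈ spanSingleton S x⁻¹ * I := by
  simpa [inv_mul_cancel₀ hx0] using mul_mem_mul (mem_spanSingleton_self S x⁻¹) hx

theorem mul_pow_lt_of_forall_succ_mul_lt {α : Type*} [CommRing α] [LinearOrder α]
    [IsStrictOrderedRing α] {a : ℕ → α} {q : α} (hq : 0 < q) {k : ℕ}
    (hk : k ≠ 0) (h : ∀ i < k, a (i + 1) * q < a i) : a k * q ^ k < a 0 := by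
  induction k with
  | zero => exact absurd rfl hk
  | succ m ih =>
    rcases Nat.eq_zero_or_pos m with rfl | hm
    · simpa using h 0 one_pos
    calc a (m + 1) * q ^ (m + 1) = a (m + 1) * q * q ^ m := by ring
      _ < a m * q ^ m := by gcongr; exact h m m.lt_succ_self
      _ < a 0 := ih hm.ne' fun i hi => h i (hi.trans m.lt_succ_self)

section

variable {F : Type*} [Field F] [NumberField F]

theorem enorm_nonneg (x : F) : 0 ≤ enorm F x := Real.sqrt_nonneg _

theorem abs_norm_le_enorm_div_sqrt_pow (x : F) :
    |(Algebra.norm ℚ x : ℝ)| ≤ (enorm F x / √(Module.finrank ℚ F)) ^ Module.finrank ℚ F := by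
  set n := Module.finrank ℚ F
  have hn : (0 : ℝ) < n := by exact_mod_cast Module.finrank_pos
  have hmult : ∑ w : InfinitePlace F, (w.mult : ℝ) = n := by
    exact_mod_cast InfinitePlace.sum_mult_eq
  have hamgm := Real.geom_mean_le_arith_mean univ (fun w : InfinitePlace F => (w.mult : ℝ))
    (fun w => w x ^ 2) (fun _ _ => by positivity) (by rw [hmult]; exact hn)
    (fun _ _ => by positivity)
  have hprod :
      ∏ w : InfinitePlace F, (w x ^ 2) ^ (w.mult : ℝ) = |(Algebra.norm ℚ x : ℝ)| ^ 2 := by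
    simp_rw [Real.rpow_natCast, ← pow_mul, mul_comm 2, pow_mul, prod_pow,
      InfinitePlace.prod_eq_abs_norm, Rat.cast_abs]
  have hsum : ∑ w : InfinitePlace F, (w.mult : ℝ) * w x ^ 2 = enorm F x ^ 2 :=
    (Real.sq_sqrt (by positivity)).symm
  rw [hprod, hsum, hmult] at hamgm
  have hsq : |(Algebra.norm ℚ x : ℝ)| ^ 2 ≤ ((enorm F x / √n) ^ n) ^ 2 := calc
    _ = ((|(Algebra.norm ℚ x : ℝ)| ^ 2) ^ (n⁻¹ : ℝ)) ^ n :=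
      (Real.rpow_inv_natCast_pow (by positivity) Module.finrank_pos.ne').symm
    _ ≤ (enorm F x ^ 2 / n) ^ n := by gcongr
    _ = ((enorm F x / √n) ^ n) ^ 2 := by
      rw [← pow_mul, mul_comm n 2, pow_mul, div_pow (enorm F x), Real.sq_sqrt hn.le]
  have hrhs : 0 ≤ (enorm F x / √n) ^ n := by have := enorm_nonneg x; positivity
  exact (pow_le_pow_iff_left₀ (abs_nonneg _) hrhs two_ne_zero).mp hsq

theorem one_le_absNorm_inv_of_one_mem {I : FractionalIdeal (𝓞 F)⁰ F} (h : (1 : F) ∈ I) :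
    1 ≤ (absNorm I⁻¹ : ℝ) := by
  have hI : I ≠ 0 := fun h0 => one_ne_zero ((mem_zero_iff _).mp (h0 ▸ h))
  have hle : I⁻¹ ≤ 1 := by
    simpa using inv_anti_mono (one_ne_zero' (FractionalIdeal (𝓞 F)⁰ F)) hI (one_le.mpr h)
  obtain ⟨I₀, hI₀⟩ := le_one_iff_exists_coeIdeal.mp hle
  have hI₀0 : Ideal.absNorm I₀ ≠ 0 := by
    rw [← Nat.cast_ne_zero (R := ℚ), ← coeIdeal_absNorm (K := F), hI₀, ne_eq,
      absNorm_eq_zero_iff]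
    exact inv_ne_zero hI
  rw [← hI₀, coeIdeal_absNorm]
  exact_mod_cast Nat.one_le_iff_ne_zero.mpr hI₀0

theorem absNorm_le_one_of_one_mem {I : FractionalIdeal (𝓞 F)⁰ F} (h : (1 : F) ∈ I) :
    (absNorm I : ℝ) ≤ 1 := by
  have h' := one_le_absNorm_inv_of_one_mem h
  rw [map_inv₀, Rat.cast_inv] at h'
  simpa using inv_le_one_of_one_le₀ h'
theorem abs_norm_mul_pow_lt_absNorm {C : ℝ} (hC : 0 < C) {I : FractionalIdeal (𝓞 F)⁰ F}
    (hI : I ≠ 0) {x : F}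
    (hx : scaleFactor I * enorm F x < √(Module.finrank ℚ F) / C) :
    |(Algebra.norm ℚ x : ℝ)| * C ^ Module.finrank ℚ F < absNorm I := by
  set n := Module.finrank ℚ F
  have hn : (0 : ℝ) < √n := Real.sqrt_pos.mpr (by exact_mod_cast Module.finrank_pos)
  have hNI : (0 : ℝ) < absNorm I := by
    exact_mod_cast (absNorm_nonneg I).lt_of_ne' ((absNorm_eq_zero_iff).not.mpr hI)
  set r := (absNorm I : ℝ) ^ (n⁻¹ : ℝ)
  have hr : 0 < r := Real.rpow_pos_of_pos hNI _
  have hscale : scaleFactor I = r⁻¹ := by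
    rw [scaleFactor, neg_div, one_div, Real.rpow_neg hNI.le]
  have hxr : enorm F x / √n * C < r := by
    rw [hscale, inv_mul_lt_iff₀ hr] at hx
    calc enorm F x / √n * C < r * (√n / C) / √n * C := by gcongr
      _ = r := by field_simp
  calc |(Algebra.norm ℚ x : ℝ)| * C ^ n ≤ (enorm F x / √n) ^ n * C ^ n := by
        gcongr; exact abs_norm_le_enorm_div_sqrt_pow x
    _ = (enorm F x / √n * C) ^ n := (mul_pow _ _ _).symm
    _ < r ^ n := by
        gcongr
        · exact mul_nonneg (div_nonneg (enorm_nonneg x) hn.le) hC.le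
        · exact Module.finrank_pos.ne'
    _ = absNorm I := Real.rpow_inv_natCast_pow hNI.le Module.finrank_pos.ne'

theorem absNorm_inv_spanSingleton_inv_mul (x : F) (I : FractionalIdeal (𝓞 F)⁰ F) :
    absNorm (spanSingleton (𝓞 F)⁰ x⁻¹ * I)⁻¹ = |Algebra.norm ℚ x| * absNorm I⁻¹ := by
  rw [mul_inv, spanSingleton_inv, inv_inv, map_mul, absNorm_span_singleton]

theorem absNorm_inv_spanSingleton_inv_mul_mul_pow_lt {C : ℝ} (hC : 0 < C)
    {I : FractionalIdeal (𝓞 F)⁰ F} (h1 : (1 : F) ∈ I) {x : F}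
    (hx : scaleFactor I * enorm F x < √(Module.finrank ℚ F) / C) :
    (absNorm (spanSingleton (𝓞 F)⁰ x⁻¹ * I)⁻¹ : ℝ) * C ^ Module.finrank ℚ F <
      absNorm I⁻¹ := by
  have hI : I ≠ 0 := fun h0 => one_ne_zero ((mem_zero_iff _).mp (h0 ▸ h1))
  have hfactor :=
    (abs_norm_mul_pow_lt_absNorm hC hI hx).trans_le (absNorm_le_one_of_one_mem h1)
  rw [absNorm_inv_spanSingleton_inv_mul, Rat.cast_mul, Rat.cast_abs, mul_right_comm]
  exact mul_lt_of_lt_one_left (by linarith [one_le_absNorm_inv_of_one_mem h1]) hfactor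

end

theorem reduction_steps_bounded {F : Type*} [Field F] [NumberField F]
    (C : ℝ) (hC : 1 < C) (k : ℕ) (hk : 1 ≤ k)
    (J : ℕ → FractionalIdeal (𝓞 F)⁰ F) (f : ℕ → F)
    (hone : (1 : F) ∈ J 1) (hN : (absNorm (J 1)⁻¹ : ℝ) ≤ parF F)
    (hstep : ∀ i, 1 ≤ i → i ≤ k →
      f i ∈ J i ∧ f i ≠ 0 ∧
      scaleFactor (J i) * enorm F (f i) < Real.sqrt (Module.finrank ℚ F) / C ∧
      (∀ g ∈ J i, g ≠ 0 → enorm F (f i) ≤ enorm F g) ∧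
      J (i + 1) = spanSingleton (𝓞 F)⁰ (f i)⁻¹ * J i) :
    (k : ℝ) < Real.log (parF F) / ((Module.finrank ℚ F) * Real.log C) := by
  set n := Module.finrank ℚ F
  have hmem : ∀ i ≤ k, (1 : F) ∈ J (i + 1) := by
    rintro (_ | i) hi
    · exact hone
    obtain ⟨hf, hf0, -, -, hJ⟩ := hstep (i + 1) (by omega) hi
    exact hJ ▸ one_mem_spanSingleton_inv_mul hf hf0
  have hdecay : ∀ i < k,
      (absNorm (J (i + 2))⁻¹ : ℝ) * C ^ n < absNorm (J (i + 1))⁻¹ := by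
    intro i hi
    obtain ⟨-, -, hlt, -, hJ⟩ := hstep (i + 1) (by omega) hi
    exact hJ ▸ absNorm_inv_spanSingleton_inv_mul_mul_pow_lt (by linarith) (hmem i hi.le) hlt
  have hpow : (C ^ n) ^ k < parF F := calc
    (C ^ n) ^ k ≤ (absNorm (J (k + 1))⁻¹ : ℝ) * (C ^ n) ^ k :=
      le_mul_of_one_le_left (by positivity) (one_le_absNorm_inv_of_one_mem (hmem k le_rfl))
    _ < absNorm (J 1)⁻¹ :=
      mul_pow_lt_of_forall_succ_mul_lt (a := fun i => (absNorm (J (i + 1))⁻¹ : ℝ))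
        (by positivity) (by omega) hdecay
    _ ≤ parF F := hN
  have hn : (0 : ℝ) < n := by exact_mod_cast Module.finrank_pos
  rw [lt_div_iff₀ (mul_pos hn (Real.log_pos hC))]
  have hlog := Real.log_lt_log (by positivity) hpow
  rw [Real.log_pow, Real.log_pow] at hlog
  linarith
end

section
/- Any lattice $L$ of rank $2$ in a Euclidean space contains a nonzero vector $g$ with $\|g\|^2 \le (4/3)^{1/2} \, \mathrm{covol}(L)$. -/
open NumberField FractionalIdeal Finset
open scoped nonZeroDivisors

/-! Take a shortest nonzero vector `x` of the lattice. It is primitive, so it extends to a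
basis `x, w` of the lattice, and replacing `w` by `w + k x` for a suitable integer `k` we may
assume `2 |⟪x, w⟫| ≤ ‖x‖²`. A change of lattice basis does not change the Gram determinant
`‖x‖² ‖w‖² - ⟪x, w⟫² = covol²`, and `‖x‖ ≤ ‖w‖` then gives `(3/4) ‖x‖⁴ ≤ covol²`. -/

open Filter Topology Matrix
open scoped RealInnerProductSpace

section NormedSpace

variable {E : Type*} [NormedAddCommGroup E] [NormedSpace ℝ E]

theorem tendsto_norm_sum_intCast_smul_cofinite {ι : Type*} [Fintype ι] {b : ι → E}
    (hb : LinearIndependent ℝ b) :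
    Tendsto (fun m : ι → ℤ => ‖∑ i, (m i : ℝ) • b i‖) cofinite atTop := by
  obtain ⟨c, hc, hbound⟩ := antilipschitzWith_iff_exists_mul_le_norm.mp <|
    (Fintype.linearCombination ℝ b).injective_iff_antilipschitz.mp
      hb.fintypeLinearCombination_injective |>.imp fun _ h => h.2
  have hcast : Tendsto (fun m : ι → ℤ => ((↑) ∘ m : ι → ℝ)) cofinite (cocompact _) := by
    simpa only [coprodᵢ_cofinite, coprodᵢ_cocompact] using!
      Tendsto.pi_map_coprodᵢ fun _ : ι => Int.tendsto_coe_cofinite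
  refine tendsto_atTop_mono (fun m => ?_)
    ((tendsto_norm_cocompact_atTop.comp hcast).const_mul_atTop hc)
  simpa [Fintype.linearCombination_apply] using hbound ((↑) ∘ m)

theorem exists_isCoprime_forall_norm_le {u v : E} (huv : LinearIndependent ℝ ![u, v]) :
    ∃ m n : ℤ, IsCoprime m n ∧ ∀ p q : ℤ, (p ≠ 0 ∨ q ≠ 0) →
      ‖(m : ℝ) • u + (n : ℝ) • v‖ ≤ ‖(p : ℝ) • u + (q : ℝ) • v‖ := by
  obtain ⟨m₀, hm₀, hmin⟩ := (tendsto_norm_sum_intCast_smul_cofinite huv).exists_within_forall_le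
    (s := {m | m ≠ 0}) ⟨1, one_ne_zero⟩
  have hmin_pair : ∀ p q : ℤ, (p ≠ 0 ∨ q ≠ 0) →
      ‖(m₀ 0 : ℝ) • u + (m₀ 1 : ℝ) • v‖ ≤ ‖(p : ℝ) • u + (q : ℝ) • v‖ := by
    intro p q hpq
    simpa [Fin.sum_univ_two] using
      hmin ![p, q] (by simpa [funext_iff, Fin.forall_fin_two, or_iff_not_imp_left] using hpq)
  have hgcd : 0 < Int.gcd (m₀ 0) (m₀ 1) := by
    rw [Int.gcd_pos_iff]
    by_contra! h
    exact hm₀ (funext <| Fin.forall_fin_two.mpr h)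
  obtain ⟨g, m, n, hg, hmn, hm, hn⟩ := Int.exists_gcd_one' hgcd
  refine ⟨m, n, Int.isCoprime_iff_gcd_eq_one.mpr hmn,
    fun p q hpq => le_trans ?_ (hmin_pair p q hpq)⟩
  have hscale : (m₀ 0 : ℝ) • u + (m₀ 1 : ℝ) • v = (g : ℝ) • ((m : ℝ) • u + (n : ℝ) • v) := by
    rw [hm, hn]; push_cast; module
  rw [hscale, norm_smul, RCLike.norm_natCast]
  exact le_mul_of_one_le_left (norm_nonneg _) (by exact_mod_cast hg)

end NormedSpace

section InnerProductSpace

variable {E : Type*} [NormedAddCommGroup E] [InnerProductSpace ℝ E]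

theorem Matrix.det_gram_fin_two (u v : E) :
    (gram ℝ ![u, v]).det = ‖u‖ ^ 2 * ‖v‖ ^ 2 - ⟪u, v⟫ ^ 2 := by
  simp [det_fin_two, gram_apply, real_inner_comm u v, sq]

theorem Matrix.det_gram_smul_add_smul (u v : E) (a b c d : ℝ) :
    (gram ℝ ![a • u + b • v, c • u + d • v]).det =
      (a * d - b * c) ^ 2 * (gram ℝ ![u, v]).det := by
  simp only [det_gram_fin_two, ← real_inner_self_eq_norm_sq, inner_add_left, inner_add_right,
    real_inner_smul_left, real_inner_smul_right, real_inner_comm u v]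
  ring

theorem exists_two_mul_abs_inner_add_intCast_smul_le (u v : E) :
    ∃ k : ℤ, 2 * |⟪u, v + (k : ℝ) • u⟫| ≤ ‖u‖ ^ 2 := by
  set t := ⟪u, v⟫ / ‖u‖ ^ 2
  refine ⟨-round t, ?_⟩
  rcases eq_or_ne u 0 with rfl | hu
  · simp
  have hu2 : 0 < ‖u‖ ^ 2 := by positivity
  have hinner : ⟪u, v + ((-round t : ℤ) : ℝ) • u⟫ = (t - round t) * ‖u‖ ^ 2 := by
    rw [inner_add_right, real_inner_smul_right, real_inner_self_eq_norm_sq]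
    simp only [t]; push_cast; field_simp; ring
  rw [hinner, abs_mul, abs_of_pos hu2]
  nlinarith [abs_sub_round t]

theorem three_mul_norm_pow_four_le_det_gram {u w : E} (hnorm : ‖u‖ ≤ ‖w‖)
    (hinner : 2 * |⟪u, w⟫| ≤ ‖u‖ ^ 2) :
    3 * ‖u‖ ^ 4 ≤ 4 * (gram ℝ ![u, w]).det := by
  rw [det_gram_fin_two]
  have hsq : ‖u‖ ^ 2 ≤ ‖w‖ ^ 2 := pow_le_pow_left₀ (norm_nonneg u) hnorm 2
  have hinner_sq : 4 * ⟪u, w⟫ ^ 2 ≤ (‖u‖ ^ 2) ^ 2 := by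
    nlinarith [sq_abs ⟪u, w⟫, abs_nonneg ⟪u, w⟫]
  nlinarith [sq_nonneg ‖u‖]

theorem exists_three_mul_norm_pow_four_le_det_gram {u v : E}
    (huv : LinearIndependent ℝ ![u, v]) :
    ∃ m n : ℤ, (m ≠ 0 ∨ n ≠ 0) ∧
      3 * ‖(m : ℝ) • u + (n : ℝ) • v‖ ^ 4 ≤ 4 * (gram ℝ ![u, v]).det := by
  obtain ⟨m, n, ⟨q, p, hqp⟩, hmin⟩ := exists_isCoprime_forall_norm_le huv
  set x := (m : ℝ) • u + (n : ℝ) • v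
  obtain ⟨k, hk⟩ := exists_two_mul_abs_inner_add_intCast_smul_le x ((-p : ℝ) • u + (q : ℝ) • v)
  have hw : (-p : ℝ) • u + (q : ℝ) • v + (k : ℝ) • x =
      ((-p + k * m : ℤ) : ℝ) • u + ((q + k * n : ℤ) : ℝ) • v := by
    simp only [x]; push_cast; module
  have hdet : m * (q + k * n) - n * (-p + k * m) = 1 := by linear_combination hqp
  refine ⟨m, n, ?_, ?_⟩
  · by_contra! h
    simp [h] at hdet
  · rw [hw] at hk
    have hshort := hmin (-p + k * m) (q + k * n) (by by_contra! h; simp [h] at hdet)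
    have := three_mul_norm_pow_four_le_det_gram hshort hk
    rw [det_gram_smul_add_smul, ← Int.cast_mul, ← Int.cast_mul, ← Int.cast_sub, hdet] at this
    simpa using this

end InnerProductSpace

theorem Matrix.det_gram_euclideanSpace {ι : Type*} [Fintype ι] [DecidableEq ι]
    (b : ι → EuclideanSpace ℝ ι) :
    (gram ℝ b).det = (of fun i j => b i j).det ^ 2 := by
  have hgram : gram ℝ b = (of fun i j => b i j) * (of fun i j => b i j)ᵀ := by
    ext i j
    simp [gram_apply, mul_apply, PiLp.inner_apply, mul_comm]
  rw [hgram, det_mul, det_transpose, sq]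

theorem rank_two_lattice_short_vector (b : Fin 2 → EuclideanSpace ℝ (Fin 2))
    (hb : LinearIndependent ℝ b) :
    ∃ m : Fin 2 → ℤ, (¬ ∀ i, m i = 0) ∧
      ‖∑ i, (m i : ℝ) • b i‖ ^ 2 ≤
        ((4 : ℝ) / 3) ^ ((1 : ℝ) / 2) * |(Matrix.of fun i j => b i j).det| := by
  have hb_eta : ![b 0, b 1] = b := by ext1 i; fin_cases i <;> rfl
  obtain ⟨m, n, hmn, hshort⟩ := exists_three_mul_norm_pow_four_le_det_gram (hb_eta ▸ hb)
  rw [hb_eta, det_gram_euclideanSpace] at hshort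
  refine ⟨![m, n], by simpa [Fin.forall_fin_two, or_iff_not_imp_left] using hmn, ?_⟩
  rw [← Real.sqrt_eq_rpow, ← Real.sqrt_sq_eq_abs, ← Real.sqrt_mul (by norm_num),
    Real.le_sqrt (by positivity) (by positivity)]
  have hsum : ∑ i, (![m, n] i : ℝ) • b i = (m : ℝ) • b 0 + (n : ℝ) • b 1 := by
    simp [Fin.sum_univ_two]
  rw [hsum, ← pow_mul]
  linarith
end

section
/- Let $F = \mathbb{Q}(\sqrt{7})$ with ring of integers $O_F = \mathbb{Z}[\sqrt 7]$, and let $I = O_F + \alpha O_F$ with $\alpha = \frac{1+\sqrt 7}{4}$. Then $1$ is primitive in $I$, $\alpha$ is a shortest nonzero vector of the lattice $I \subset F_\mathbb{R} \cong \mathbb{R}^2$ with $\|\alpha\| = 1$, and consequently $I$ is strongly $2$-reduced but not strongly $1$-reduced. -/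
open NumberField FractionalIdeal Finset
open scoped nonZeroDivisors

lemma sqrt7_sq : Real.sqrt 7 ^ 2 = 7 := Real.sq_sqrt (by norm_num)

lemma quad_pos (m n : ℤ) (h : ¬ (m = 0 ∧ n = 0)) : 1 ≤ 2 * m ^ 2 + m * n + n ^ 2 := by
  rcases eq_or_ne n 0 with hn | hn
  · subst hn
    have hm : m ≠ 0 := by tauto
    have := Int.one_le_abs hm
    nlinarith [sq_abs m]
  · have := Int.one_le_abs hn
    nlinarith [sq_nonneg (2 * m + n), sq_nonneg m, sq_abs n]

lemma key (g : ℝ × ℝ)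
    (hg : g ∈ AddSubgroup.closure {((1 : ℝ), (1 : ℝ)),
        ((1 + Real.sqrt 7) / 4, (1 - Real.sqrt 7) / 4)})
    (hne : g ≠ 0) : (1 : ℝ) ≤ g.1 ^ 2 + g.2 ^ 2 := by
  rw [AddSubgroup.mem_closure_pair] at hg
  obtain ⟨m, n, rfl⟩ := hg
  have hmn : ¬ (m = 0 ∧ n = 0) := by
    rintro ⟨rfl, rfl⟩; simp at hne
  have h7 := sqrt7_sq
  have hq := quad_pos m n hmn
  have hq' : (1 : ℝ) ≤ 2 * (m : ℝ) ^ 2 + m * n + n ^ 2 := by exact_mod_cast hq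
  have h1 : (m • ((1 : ℝ), (1 : ℝ)) + n • ((1 + Real.sqrt 7) / 4, (1 - Real.sqrt 7) / 4)).1
      = m + n * ((1 + Real.sqrt 7) / 4) := by simp
  have h2 : (m • ((1 : ℝ), (1 : ℝ)) + n • ((1 + Real.sqrt 7) / 4, (1 - Real.sqrt 7) / 4)).2
      = m + n * ((1 - Real.sqrt 7) / 4) := by simp
  rw [h1, h2]
  nlinarith

theorem example_sqrt7 :
    ∀ L : AddSubgroup (ℝ × ℝ),
      L = AddSubgroup.closure {((1 : ℝ), (1 : ℝ)),
        ((1 + Real.sqrt 7) / 4, (1 - Real.sqrt 7) / 4)} →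
      -- 1 is primitive in I
      (((1 : ℝ), (1 : ℝ)) ∈ L ∧ ∀ d : ℕ, 2 ≤ d → (((d : ℝ)⁻¹, (d : ℝ)⁻¹) ∉ L)) ∧
      -- α is a shortest nonzero vector, of length 1
      (((1 + Real.sqrt 7) / 4, (1 - Real.sqrt 7) / 4) ∈ L ∧
        Real.sqrt (((1 + Real.sqrt 7) / 4) ^ 2 + ((1 - Real.sqrt 7) / 4) ^ 2) = 1 ∧
        ∀ g ∈ L, g ≠ 0 → (1 : ℝ) ≤ Real.sqrt (g.1 ^ 2 + g.2 ^ 2)) ∧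
      -- I is strongly 2-reduced
      (∀ g ∈ L, g ≠ 0 → Real.sqrt 2 ≤ 2 * Real.sqrt (g.1 ^ 2 + g.2 ^ 2)) ∧
      -- but I is not strongly 1-reduced
      ¬ (∀ g ∈ L, g ≠ 0 → Real.sqrt 2 ≤ 1 * Real.sqrt (g.1 ^ 2 + g.2 ^ 2)) := by
  intro L hL
  subst hL
  have h7 := sqrt7_sq
  have hshort : ∀ g ∈ AddSubgroup.closure {((1 : ℝ), (1 : ℝ)),
        ((1 + Real.sqrt 7) / 4, (1 - Real.sqrt 7) / 4)}, g ≠ 0 →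
      (1 : ℝ) ≤ Real.sqrt (g.1 ^ 2 + g.2 ^ 2) := by
    intro g hg hne
    have := key g hg hne
    calc (1:ℝ) = Real.sqrt 1 := (Real.sqrt_one).symm
    _ ≤ _ := Real.sqrt_le_sqrt this
  have halphanorm : Real.sqrt (((1 + Real.sqrt 7) / 4) ^ 2 + ((1 - Real.sqrt 7) / 4) ^ 2) = 1 := by
    have : ((1 + Real.sqrt 7) / 4) ^ 2 + ((1 - Real.sqrt 7) / 4) ^ 2 = 1 := by nlinarith
    rw [this, Real.sqrt_one]
  have halpha : ((1 + Real.sqrt 7) / 4, (1 - Real.sqrt 7) / 4) ∈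
      AddSubgroup.closure {((1 : ℝ), (1 : ℝ)),
        ((1 + Real.sqrt 7) / 4, (1 - Real.sqrt 7) / 4)} :=
    AddSubgroup.subset_closure (by simp)
  have halphane : (((1 + Real.sqrt 7) / 4, (1 - Real.sqrt 7) / 4) : ℝ × ℝ) ≠ 0 := by
    have h0 : (0:ℝ) < Real.sqrt 7 := Real.sqrt_pos.mpr (by norm_num)
    intro h
    have := congrArg Prod.fst h
    simp only [Prod.fst_zero] at this
    nlinarith
  refine ⟨⟨AddSubgroup.subset_closure (by simp), ?_⟩, ⟨halpha, halphanorm, hshort⟩, ?_, ?_⟩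
  · intro d hd hmem
    have hne : (((d : ℝ)⁻¹, (d : ℝ)⁻¹) : ℝ × ℝ) ≠ 0 := by
      have : (0:ℝ) < (d:ℝ)⁻¹ := by positivity
      intro h
      have := congrArg Prod.fst h
      simp only [Prod.fst_zero] at this
      linarith
    have h1 := key _ hmem hne
    simp only at h1
    have hd2 : (2:ℝ) ≤ (d:ℝ) := by exact_mod_cast hd
    have : (d:ℝ)⁻¹ ≤ 1/2 := by
      rw [inv_le_comm₀ (by linarith) (by norm_num)]; linarith
    have hpos : (0:ℝ) < (d:ℝ)⁻¹ := by positivity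
    nlinarith
  · intro g hg hne
    have h1 := hshort g hg hne
    have h2 : Real.sqrt 2 ≤ 2 := by
      have h4 : Real.sqrt 2 ≤ Real.sqrt 4 := Real.sqrt_le_sqrt (by norm_num)
      rwa [show (4:ℝ) = 2^2 by norm_num, Real.sqrt_sq (by norm_num : (0:ℝ) ≤ 2)] at h4
    nlinarith
  · intro h
    have := h _ halpha halphane
    rw [halphanorm] at this
    have h2 : (1:ℝ) < Real.sqrt 2 := by
      rw [show (1:ℝ) = Real.sqrt 1 by rw [Real.sqrt_one]]
      exact Real.sqrt_lt_sqrt (by norm_num) (by norm_num)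
    linarith
end
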